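/- Let t, s ∈ ℂⁿ be unit vectors with ⟨t, s̄⟩ = 0, τ = (\underline{t} − \underline{s})(\underline{t}† + \underline{s}†) the associated Clifford null-vector, and define f^{[p,q]}_τ(z) = ⟨z, \overline{s+t}⟩^p ⟨z̄, s−t⟩^q τ. Then f^{[p,q]}_τ is Hermitian monogenic: ∂_{\underline{z}} f^{[p,q]}_τ = 0 and ∂_{\underline{z}†} f^{[p,q]}_τ = 0, where ∂_{\underline{z}} = Σⱼ fⱼ† ∂_{zⱼ} and ∂_{\underline{z}†} = Σⱼ fⱼ ∂_{z̄ⱼ}. -/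

import Mathlib

/-!
The scalar factor of the plane wave is a power of the holomorphic linear form `⟨z, conj(s+t)⟩`
times a power of the antiholomorphic form `⟨z̄, s - t⟩`, so `∂_{zⱼ}` only differentiates the first
factor and produces a multiple of `conj(sⱼ + tⱼ)`, while `∂_{z̄ⱼ}` only differentiates the second
and produces a multiple of `sⱼ - tⱼ`. With `v = t̲ - s̲` and `c = t̲† + s̲†`, so that `τ = v c`,
`∂_{z̲} F` is therefore a scalar multiple of `c v c` and `∂_{z̲†} F` one of `v v c`. The Grassmann
relations give `v² = c² = 0`, and the duality relations give
`v c + c v = Σⱼ (tⱼ - sⱼ) conj(sⱼ + tⱼ) = |t|² - |s|² + ⟨t, s̄⟩ - conj ⟨t, s̄⟩ = 0`,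
hence `c v c = -v c² = 0`.
-/

open Complex Function

/-- The holomorphic coordinate `zⱼ = xⱼ + i x_{n+j}` on `ℝ^{2n} ≅ ℂⁿ`. -/
noncomputable def zc (n : ℕ) (j : Fin n) (x : (Fin n → ℝ) × (Fin n → ℝ)) : ℂ :=
  (x.1 j : ℂ) + Complex.I * (x.2 j : ℂ)

/-- The anti-holomorphic coordinate `z̄ⱼ = xⱼ - i x_{n+j}`. -/
noncomputable def zbarc (n : ℕ) (j : Fin n) (x : (Fin n → ℝ) × (Fin n → ℝ)) : ℂ :=
  (x.1 j : ℂ) - Complex.I * (x.2 j : ℂ)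

/-- The Wirtinger derivative `∂_{zⱼ} = (∂_{xⱼ} - i ∂_{x_{n+j}})/2` on `A`-valued
functions, for a normed ℂ-algebra `A`. -/
noncomputable def pzA (n : ℕ) {A : Type*} [NormedRing A] [NormedAlgebra ℂ A]
    (j : Fin n) (f : (Fin n → ℝ) × (Fin n → ℝ) → A) :
    (Fin n → ℝ) × (Fin n → ℝ) → A := fun x =>
  (1 / 2 : ℂ) • (deriv (fun u => f (Function.update x.1 j u, x.2)) (x.1 j)
    - Complex.I • deriv (fun u => f (x.1, Function.update x.2 j u)) (x.2 j))

/-- The Wirtinger derivative `∂_{z̄ⱼ} = (∂_{xⱼ} + i ∂_{x_{n+j}})/2` on `A`-valued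
functions. -/
noncomputable def pzbarA (n : ℕ) {A : Type*} [NormedRing A] [NormedAlgebra ℂ A]
    (j : Fin n) (f : (Fin n → ℝ) × (Fin n → ℝ) → A) :
    (Fin n → ℝ) × (Fin n → ℝ) → A := fun x =>
  (1 / 2 : ℂ) • (deriv (fun u => f (Function.update x.1 j u, x.2)) (x.1 j)
    + Complex.I • deriv (fun u => f (x.1, Function.update x.2 j u)) (x.2 j))

section Clifford

variable {ι : Type*} [Fintype ι] {A : Type*} [Ring A] [Algebra ℂ A]

theorem sum_smul_mul_self_eq_zero (e : ι → A) (he : ∀ j k, e j * e k + e k * e j = 0)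
    (a : ι → ℂ) : (∑ j, a j • e j) * (∑ j, a j • e j) = 0 := by
  have h2 : (2 : ℂ) • ((∑ j, a j • e j) * (∑ j, a j • e j)) = 0 := by
    rw [two_smul, Finset.sum_mul_sum]
    nth_rewrite 2 [Finset.sum_comm]
    rw [← Finset.sum_add_distrib]
    refine Finset.sum_eq_zero fun j _ => ?_
    rw [← Finset.sum_add_distrib]
    refine Finset.sum_eq_zero fun k _ => ?_
    simp only [smul_mul_smul_comm, mul_comm (a k) (a j), ← smul_add, he, smul_zero]
  simpa using h2

theorem sum_smul_anticomm [DecidableEq ι] (e e' : ι → A)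
    (h : ∀ j k, e j * e' k + e' k * e j = algebraMap ℂ A (if j = k then 1 else 0))
    (a b : ι → ℂ) :
    (∑ j, a j • e j) * (∑ k, b k • e' k) + (∑ k, b k • e' k) * (∑ j, a j • e j)
      = algebraMap ℂ A (∑ j, a j * b j) := by
  have hterm : ∀ j k, (a j • e j) * (b k • e' k) + (b k • e' k) * (a j • e j)
      = if j = k then algebraMap ℂ A (a j * b j) else 0 := by
    intro j k
    rw [smul_mul_smul_comm, smul_mul_smul_comm, mul_comm (b k), ← smul_add, h, Algebra.smul_def,
      ← map_mul]
    split_ifs with hjk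
    · rw [hjk, mul_one]
    · rw [mul_zero, map_zero]
  rw [Finset.sum_mul_sum, Finset.sum_mul_sum]
  nth_rewrite 2 [Finset.sum_comm]
  simp only [← Finset.sum_add_distrib, hterm, Finset.sum_ite_eq, Finset.mem_univ, if_true,
    map_sum]

theorem mul_mul_self_eq_zero_of_anticomm {R : Type*} [Ring R] {v c : R} (hc : c * c = 0)
    (hvc : v * c + c * v = 0) : c * (v * c) = 0 := by
  rw [← mul_assoc, eq_neg_of_add_eq_zero_right hvc, neg_mul, mul_assoc, hc, mul_zero, neg_zero]

theorem sum_mul_smul (e : ι → A) (K : ℂ) (a : ι → ℂ) (τ : A) :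
    ∑ j, e j * ((K * a j) • τ) = K • ((∑ j, a j • e j) * τ) := by
  simp only [Finset.sum_mul, Finset.smul_sum, smul_mul_assoc, mul_smul_comm, mul_smul]

end Clifford

open ComplexConjugate

theorem sum_sub_mul_conj_add_eq_zero {ι : Type*} [Fintype ι] (t s : ι → ℂ)
    (ht : ∑ j, t j * conj (t j) = 1) (hs : ∑ j, s j * conj (s j) = 1)
    (hts : ∑ j, t j * conj (s j) = 0) : ∑ j, (t j - s j) * conj (s j + t j) = 0 := by
  have hst : ∑ j, s j * conj (t j) = 0 := by
    simpa [map_sum, mul_comm] using congrArg conj hts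
  simp only [map_add, mul_add, sub_mul, Finset.sum_add_distrib, Finset.sum_sub_distrib, ht, hs,
    hts, hst]
  ring

theorem Fintype.sum_eq_sum_add_sub_of_forall_ne {ι M : Type*} [Fintype ι] [DecidableEq ι]
    [AddCommGroup M] {φ ψ : ι → M} (j : ι) (h : ∀ i ≠ j, ψ i = φ i) :
    ∑ i, ψ i = ∑ i, φ i + (ψ j - φ j) := by
  rw [← Finset.add_sum_erase _ _ (Finset.mem_univ j),
    ← Finset.add_sum_erase _ _ (Finset.mem_univ j),
    Finset.sum_congr rfl fun i hi => h i (Finset.ne_of_mem_erase hi)]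
  abel

theorem hasDerivAt_const_add_sub_mul (a w : ℂ) (z u : ℝ) :
    HasDerivAt (fun v : ℝ => a + ((v : ℂ) - z) * w) w u := by
  simpa using (((hasDerivAt_id (u : ℂ)).sub_const (z : ℂ)).mul_const w).const_add a |>.comp_ofReal

section PlaneWave

variable {n : ℕ} {A : Type*} [NormedRing A] [NormedAlgebra ℂ A]

noncomputable def zDot (c : Fin n → ℂ) (y : (Fin n → ℝ) × (Fin n → ℝ)) : ℂ :=
  ∑ i, zc n i y * c i

noncomputable def zbarDot (d : Fin n → ℂ) (y : (Fin n → ℝ) × (Fin n → ℝ)) : ℂ :=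
  ∑ i, zbarc n i y * d i

theorem zDot_update_fst (c : Fin n → ℂ) (x : (Fin n → ℝ) × (Fin n → ℝ)) (j : Fin n) (u : ℝ) :
    zDot c (update x.1 j u, x.2) = zDot c x + ((u : ℂ) - x.1 j) * c j := by
  rw [zDot, zDot, Fintype.sum_eq_sum_add_sub_of_forall_ne (φ := fun i => zc n i x * c i) j
    fun i hi => by simp [zc, update_of_ne hi]]
  simp only [zc, update_self]
  ring

theorem zDot_update_snd (c : Fin n → ℂ) (x : (Fin n → ℝ) × (Fin n → ℝ)) (j : Fin n) (u : ℝ) :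
    zDot c (x.1, update x.2 j u) = zDot c x + ((u : ℂ) - x.2 j) * (I * c j) := by
  rw [zDot, zDot, Fintype.sum_eq_sum_add_sub_of_forall_ne (φ := fun i => zc n i x * c i) j
    fun i hi => by simp [zc, update_of_ne hi]]
  simp only [zc, update_self]
  ring

theorem zbarDot_update_fst (d : Fin n → ℂ) (x : (Fin n → ℝ) × (Fin n → ℝ)) (j : Fin n) (u : ℝ) :
    zbarDot d (update x.1 j u, x.2) = zbarDot d x + ((u : ℂ) - x.1 j) * d j := by
  rw [zbarDot, zbarDot, Fintype.sum_eq_sum_add_sub_of_forall_ne (φ := fun i => zbarc n i x * d i) j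
    fun i hi => by simp [zbarc, update_of_ne hi]]
  simp only [zbarc, update_self]
  ring

theorem zbarDot_update_snd (d : Fin n → ℂ) (x : (Fin n → ℝ) × (Fin n → ℝ)) (j : Fin n) (u : ℝ) :
    zbarDot d (x.1, update x.2 j u) = zbarDot d x + ((u : ℂ) - x.2 j) * (-I * d j) := by
  rw [zbarDot, zbarDot, Fintype.sum_eq_sum_add_sub_of_forall_ne (φ := fun i => zbarc n i x * d i) j
    fun i hi => by simp [zbarc, update_of_ne hi]]
  simp only [zbarc, update_self]
  ring

theorem pzA_eq_of_hasDerivAt {F : (Fin n → ℝ) × (Fin n → ℝ) → A} {x : (Fin n → ℝ) × (Fin n → ℝ)}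
    {j : Fin n} {α β : A}
    (h₁ : HasDerivAt (fun u => F (update x.1 j u, x.2)) (α + β) (x.1 j))
    (h₂ : HasDerivAt (fun u => F (x.1, update x.2 j u)) (I • α - I • β) (x.2 j)) :
    pzA n j F x = α := by
  rw [pzA, h₁.deriv, h₂.deriv]
  linear_combination (norm := module) I_mul_I • ((-1 / 2 : ℂ) • α + (1 / 2 : ℂ) • β)

theorem pzbarA_eq_of_hasDerivAt {F : (Fin n → ℝ) × (Fin n → ℝ) → A} {x : (Fin n → ℝ) × (Fin n → ℝ)}
    {j : Fin n} {α β : A}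
    (h₁ : HasDerivAt (fun u => F (update x.1 j u, x.2)) (α + β) (x.1 j))
    (h₂ : HasDerivAt (fun u => F (x.1, update x.2 j u)) (I • α - I • β) (x.2 j)) :
    pzbarA n j F x = β := by
  rw [pzbarA, h₁.deriv, h₂.deriv]
  linear_combination (norm := module) I_mul_I • ((1 / 2 : ℂ) • α + (-1 / 2 : ℂ) • β)

noncomputable def planeWave (c d : Fin n → ℂ) (p q : ℕ) (τ : A)
    (y : (Fin n → ℝ) × (Fin n → ℝ)) : A :=
  (zDot c y ^ p * zbarDot d y ^ q) • τ

variable (c d : Fin n → ℂ) (p q : ℕ) (τ : A) (x : (Fin n → ℝ) × (Fin n → ℝ)) (j : Fin n)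

theorem hasDerivAt_planeWave_update_fst :
    HasDerivAt (fun u => planeWave c d p q τ (update x.1 j u, x.2))
      ((p * zDot c x ^ (p - 1) * zbarDot d x ^ q * c j) • τ
        + (zDot c x ^ p * (q * zbarDot d x ^ (q - 1)) * d j) • τ) (x.1 j) := by
  have hP : HasDerivAt (fun u : ℝ => zDot c (update x.1 j u, x.2)) (c j) (x.1 j) := by
    simpa only [zDot_update_fst] using hasDerivAt_const_add_sub_mul (zDot c x) (c j) _ _
  have hQ : HasDerivAt (fun u : ℝ => zbarDot d (update x.1 j u, x.2)) (d j) (x.1 j) := by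
    simpa only [zbarDot_update_fst] using hasDerivAt_const_add_sub_mul (zbarDot d x) (d j) _ _
  refine (((hP.fun_pow p).fun_mul (hQ.fun_pow q)).smul_const τ).congr_deriv ?_
  rw [update_eq_self, ← add_smul]
  congr 1
  ring

theorem hasDerivAt_planeWave_update_snd :
    HasDerivAt (fun u => planeWave c d p q τ (x.1, update x.2 j u))
      (I • (p * zDot c x ^ (p - 1) * zbarDot d x ^ q * c j) • τ
        - I • (zDot c x ^ p * (q * zbarDot d x ^ (q - 1)) * d j) • τ) (x.2 j) := by
  have hP : HasDerivAt (fun u : ℝ => zDot c (x.1, update x.2 j u)) (I * c j) (x.2 j) := by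
    simpa only [zDot_update_snd] using hasDerivAt_const_add_sub_mul (zDot c x) (I * c j) _ _
  have hQ : HasDerivAt (fun u : ℝ => zbarDot d (x.1, update x.2 j u)) (-I * d j) (x.2 j) := by
    simpa only [zbarDot_update_snd] using
      hasDerivAt_const_add_sub_mul (zbarDot d x) (-I * d j) _ _
  refine (((hP.fun_pow p).fun_mul (hQ.fun_pow q)).smul_const τ).congr_deriv ?_
  rw [update_eq_self, smul_smul, smul_smul, ← sub_smul]
  congr 1
  ring

theorem pzA_planeWave :
    pzA n j (planeWave c d p q τ) x = (p * zDot c x ^ (p - 1) * zbarDot d x ^ q * c j) • τ :=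
  pzA_eq_of_hasDerivAt (hasDerivAt_planeWave_update_fst c d p q τ x j)
    (hasDerivAt_planeWave_update_snd c d p q τ x j)

theorem pzbarA_planeWave :
    pzbarA n j (planeWave c d p q τ) x
      = (zDot c x ^ p * (q * zbarDot d x ^ (q - 1)) * d j) • τ :=
  pzbarA_eq_of_hasDerivAt (hasDerivAt_planeWave_update_fst c d p q τ x j)
    (hasDerivAt_planeWave_update_snd c d p q τ x j)

theorem planeWave_hermitianMonogenic (e e' : Fin n → A) (hc : (∑ j, c j • e' j) * τ = 0)
    (hd : (∑ j, d j • e j) * τ = 0) :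
    ∑ j, e' j * pzA n j (planeWave c d p q τ) x = 0 ∧
      ∑ j, e j * pzbarA n j (planeWave c d p q τ) x = 0 := by
  simp only [pzA_planeWave, pzbarA_planeWave, sum_mul_smul, hc, hd, smul_zero, and_self]

end PlaneWave

/-- The Hermitian monogenic plane wave
`f^{[p,q]}_τ(z) = ⟨z, conj(s+t)⟩^p ⟨z̄, s−t⟩^q τ`, with
`τ = (t̲ − s̲)(t̲† + s̲†)`, lies in the kernel of both Hermitian Dirac operators
`∂_{z̲} = Σⱼ fⱼ† ∂_{zⱼ}` and `∂_{z̲†} = Σⱼ fⱼ ∂_{z̄ⱼ}`. -/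
theorem stmt19 (n : ℕ) {A : Type*} [NormedRing A] [NormedAlgebra ℂ A]
    (f fd : Fin n → A)
    (hff : ∀ j k, f j * f k + f k * f j = 0)
    (hfdfd : ∀ j k, fd j * fd k + fd k * fd j = 0)
    (hffd : ∀ j k, f j * fd k + fd k * f j =
      algebraMap ℂ A (if j = k then 1 else 0))
    (t s : Fin n → ℂ)
    (ht : ∑ j, t j * (starRingEnd ℂ) (t j) = 1)
    (hs : ∑ j, s j * (starRingEnd ℂ) (s j) = 1)
    (hts : ∑ j, t j * (starRingEnd ℂ) (s j) = 0)
    (p q : ℕ) :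
    letI ut : A := ∑ j, t j • f j
    letI us : A := ∑ j, s j • f j
    letI utd : A := ∑ j, (starRingEnd ℂ) (t j) • fd j
    letI usd : A := ∑ j, (starRingEnd ℂ) (s j) • fd j
    letI τ : A := (ut - us) * (utd + usd)
    letI F : (Fin n → ℝ) × (Fin n → ℝ) → A := fun x =>
      ((∑ i, zc n i x * (starRingEnd ℂ) (s i + t i)) ^ p
        * (∑ i, zbarc n i x * (s i - t i)) ^ q) • τ
    ∀ x : (Fin n → ℝ) × (Fin n → ℝ),
      (∑ j, fd j * pzA n j F x = 0) ∧ (∑ j, f j * pzbarA n j F x = 0) := by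
  intro x
  set v := ∑ j, (t j - s j) • f j
  set c := ∑ j, conj (s j + t j) • fd j
  have hv : ∑ j, t j • f j - ∑ j, s j • f j = v := by
    simp only [v, sub_smul, Finset.sum_sub_distrib]
  have hc : ∑ j, conj (t j) • fd j + ∑ j, conj (s j) • fd j = c := by
    simp only [c, map_add, add_smul, Finset.sum_add_distrib, add_comm]
  have hv2 : v * v = 0 := sum_smul_mul_self_eq_zero f hff _
  have hc2 : c * c = 0 := sum_smul_mul_self_eq_zero fd hfdfd _
  have hvc : v * c + c * v = 0 := by
    rw [sum_smul_anticomm f fd hffd, sum_sub_mul_conj_add_eq_zero t s ht hs hts, map_zero]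
  have hneg : ∑ j, (s j - t j) • f j = -v := by
    simp only [v, ← Finset.sum_neg_distrib, ← neg_smul, neg_sub]
  refine planeWave_hermitianMonogenic (fun i => conj (s i + t i)) (fun i => s i - t i) p q _ x
    f fd ?_ ?_ <;> simp only [hv, hc]
  · exact mul_mul_self_eq_zero_of_anticomm hc2 hvc
  · rw [hneg, neg_mul, ← mul_assoc, hv2, zero_mul, neg_zero]
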